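/- On C_0^∞(ℝ³), the operators A = e^z D_x − 2iB_x D_z, A† = e^z D_x + 2iB_x D_z (with D_x = −i∂_x, D_z = −i∂_z) satisfy A† A = e^{2z} D_x² + 2B_x e^z D_x + 4 B_x² D_z², and consequently the magnetic Schrödinger operator 2H = (e^z D_x + B_x)² + (e^{−z} D_y + B_y)² + D_z² on the group Sol decomposes as 2H = A_x† A_x + A_y† A_y + (1 − 4B²) D_z² + B², where B² = B_x² + B_y² and A_y, A_y† are the analogous operators with e^{−z}, D_y, B_y and opposite sign of the D_z term. -/

import Mathlib

/-- Functions of three real variables (elements of `C^∞(ℝ³, ℂ)` in curried form). -/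
abbrev F3 : Type := ℝ → ℝ → ℝ → ℂ

/-- `D_x = −i ∂/∂x`. -/
noncomputable def DX (u : F3) : F3 := fun x y z => -Complex.I * deriv (fun t => u t y z) x
/-- `D_y = −i ∂/∂y`. -/
noncomputable def DY (u : F3) : F3 := fun x y z => -Complex.I * deriv (fun t => u x t z) y
/-- `D_z = −i ∂/∂z`. -/
noncomputable def DZ (u : F3) : F3 := fun x y z => -Complex.I * deriv (fun t => u x y t) z

/-- The annihilation operator `A = e^z D_x − 2iB_x D_z`. -/
noncomputable def Aop (Bx : ℝ) (u : F3) : F3 := fun x y z =>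
  (Real.exp z : ℂ) * DX u x y z - 2 * Complex.I * (Bx : ℂ) * DZ u x y z
/-- The creation operator `A† = e^z D_x + 2iB_x D_z`. -/
noncomputable def Adag (Bx : ℝ) (u : F3) : F3 := fun x y z =>
  (Real.exp z : ℂ) * DX u x y z + 2 * Complex.I * (Bx : ℂ) * DZ u x y z
/-- The analogous operator `A_y = e^{−z} D_y + 2iB_y D_z`. -/
noncomputable def AopY (By : ℝ) (u : F3) : F3 := fun x y z =>
  (Real.exp (-z) : ℂ) * DY u x y z + 2 * Complex.I * (By : ℂ) * DZ u x y z
/-- `A_y† = e^{−z} D_y − 2iB_y D_z`. -/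
noncomputable def AdagY (By : ℝ) (u : F3) : F3 := fun x y z =>
  (Real.exp (-z) : ℂ) * DY u x y z - 2 * Complex.I * (By : ℂ) * DZ u x y z
/-- `e^z D_x + B_x`. -/
noncomputable def PX (Bx : ℝ) (u : F3) : F3 := fun x y z =>
  (Real.exp z : ℂ) * DX u x y z + (Bx : ℂ) * u x y z
/-- `e^{−z} D_y + B_y`. -/
noncomputable def PY (By : ℝ) (u : F3) : F3 := fun x y z =>
  (Real.exp (-z) : ℂ) * DY u x y z + (By : ℂ) * u x y z


section SolAux

abbrev E3 : Type := ℝ × ℝ × ℝ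
noncomputable def ee1 : E3 := (1, 0, 0)
noncomputable def ee2 : E3 := (0, 1, 0)
noncomputable def ee3 : E3 := (0, 0, 1)
noncomputable def unc (u : F3) : E3 → ℂ := fun p => u p.1 p.2.1 p.2.2
noncomputable def dd (g : E3 → ℂ) (v : E3) : E3 → ℂ := fun p => fderiv ℝ g p v

lemma sliceX (g : E3 → ℂ) (hg : Differentiable ℝ g) (x y z : ℝ) :
    HasDerivAt (fun t => g (t, y, z)) (fderiv ℝ g (x, y, z) ee1) x := by
  have h : HasDerivAt (fun t : ℝ => ((t, y, z) : E3)) ee1 x :=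
    HasDerivAt.prodMk (hasDerivAt_id x) (HasDerivAt.prodMk (hasDerivAt_const x y) (hasDerivAt_const x z))
  exact (hg (x, y, z)).hasFDerivAt.comp_hasDerivAt x h

lemma sliceY (g : E3 → ℂ) (hg : Differentiable ℝ g) (x y z : ℝ) :
    HasDerivAt (fun t => g (x, t, z)) (fderiv ℝ g (x, y, z) ee2) y := by
  have h : HasDerivAt (fun t : ℝ => ((x, t, z) : E3)) ee2 y :=
    HasDerivAt.prodMk (hasDerivAt_const y x) (HasDerivAt.prodMk (hasDerivAt_id y) (hasDerivAt_const y z))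
  exact (hg (x, y, z)).hasFDerivAt.comp_hasDerivAt y h

lemma sliceZ (g : E3 → ℂ) (hg : Differentiable ℝ g) (x y z : ℝ) :
    HasDerivAt (fun t => g (x, y, t)) (fderiv ℝ g (x, y, z) ee3) z := by
  have h : HasDerivAt (fun t : ℝ => ((x, y, t) : E3)) ee3 z :=
    HasDerivAt.prodMk (hasDerivAt_const z x) (HasDerivAt.prodMk (hasDerivAt_const z y) (hasDerivAt_id z))
  exact (hg (x, y, z)).hasFDerivAt.comp_hasDerivAt z h

lemma contDiff_dd (g : E3 → ℂ) (hg : ContDiff ℝ (⊤ : ℕ∞) g) (v : E3) :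
    ContDiff ℝ (⊤ : ℕ∞) (dd g v) :=
  (hg.fderiv_right (by simp)).clm_apply contDiff_const

lemma symm_dd (g : E3 → ℂ) (hg : ContDiff ℝ (⊤ : ℕ∞) g) (p v w : E3) :
    fderiv ℝ (dd g v) p w = fderiv ℝ (dd g w) p v := by
  have hd : Differentiable ℝ (fderiv ℝ g) := (hg.fderiv_right (m := (⊤ : ℕ∞)) (by simp)).differentiable (by simp)
  have key : ∀ a b : E3, fderiv ℝ (fun q => fderiv ℝ g q a) p b
      = fderiv ℝ (fderiv ℝ g) p b a := by
    intro a b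
    have h2 : fderiv ℝ (fun q => (fderiv ℝ g q) a) p
        = (fderiv ℝ (fderiv ℝ g) p).flip a := by
      rw [fderiv_clm_apply (hd p) (differentiableAt_const a)]
      simp
    rw [h2]; rfl
  show fderiv ℝ (fun q => fderiv ℝ g q v) p w = fderiv ℝ (fun q => fderiv ℝ g q w) p v
  rw [key, key]
  exact second_derivative_symmetric (fun q => ((hg.differentiable (by simp)) q).hasFDerivAt)
    (hd p).hasFDerivAt w v

end SolAux

/-- On `C_0^∞(ℝ³)`, `A† A = e^{2z} D_x² + 2B_x e^z D_x + 4B_x² D_z²`,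
and consequently the magnetic Schrödinger operator
`2H = (e^z D_x + B_x)² + (e^{−z} D_y + B_y)² + D_z²` on `Sol` decomposes as
`2H = A_x† A_x + A_y† A_y + (1 − 4B²) D_z² + B²`, where `B² = B_x² + B_y²`. -/
theorem sol_creation_annihilation_decomposition (Bx By : ℝ) (u : F3)
    (hu : ContDiff ℝ (⊤ : ℕ∞) (fun p : ℝ × ℝ × ℝ => u p.1 p.2.1 p.2.2))
    (hc : HasCompactSupport (fun p : ℝ × ℝ × ℝ => u p.1 p.2.1 p.2.2)) :
    (∀ x y z : ℝ, Adag Bx (Aop Bx u) x y z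
        = (Real.exp (2*z) : ℂ) * DX (DX u) x y z
          + 2 * (Bx : ℂ) * (Real.exp z : ℂ) * DX u x y z
          + 4 * (Bx : ℂ)^2 * DZ (DZ u) x y z) ∧
    (∀ x y z : ℝ, PX Bx (PX Bx u) x y z + PY By (PY By u) x y z + DZ (DZ u) x y z
        = Adag Bx (Aop Bx u) x y z + AdagY By (AopY By u) x y z
          + (1 - 4 * ((Bx : ℂ)^2 + (By : ℂ)^2)) * DZ (DZ u) x y z
          + ((Bx : ℂ)^2 + (By : ℂ)^2) * u x y z) := by
  
  have hu' : ContDiff ℝ (⊤ : ℕ∞) (unc u) := hu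
  have hFd : Differentiable ℝ (unc u) := hu'.differentiable (by simp)
  have hG1d : Differentiable ℝ (dd (unc u) ee1) := (contDiff_dd _ hu' ee1).differentiable (by simp)
  have hG2d : Differentiable ℝ (dd (unc u) ee2) := (contDiff_dd _ hu' ee2).differentiable (by simp)
  have hG3d : Differentiable ℝ (dd (unc u) ee3) := (contDiff_dd _ hu' ee3).differentiable (by simp)
  have hI2 : Complex.I ^ 2 = -1 := Complex.I_sq
  have hI3 : Complex.I ^ 3 = -Complex.I := by rw [pow_succ, hI2]; ring
  have hI4 : Complex.I ^ 4 = 1 := by rw [show (4:ℕ) = 2 + 2 from rfl, pow_add, hI2]; ring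
  have hDXp : ∀ a b c : ℝ, DX u a b c = -Complex.I * dd (unc u) ee1 (a, b, c) := by
    intro a b c
    show -Complex.I * deriv (fun t => unc u (t, b, c)) a = _
    rw [(sliceX (unc u) hFd a b c).deriv]; rfl
  have hA : ∀ a b c : ℝ, Aop Bx u a b c
      = (Real.exp c : ℂ) * (-Complex.I * dd (unc u) ee1 (a, b, c))
        - 2 * Complex.I * (Bx : ℂ) * (-Complex.I * dd (unc u) ee3 (a, b, c)) := by
    intro a b c
    show (Real.exp c : ℂ) * (-Complex.I * deriv (fun t => unc u (t, b, c)) a)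
        - 2 * Complex.I * (Bx : ℂ) * (-Complex.I * deriv (fun t => unc u (a, b, t)) c) = _
    rw [(sliceX (unc u) hFd a b c).deriv, (sliceZ (unc u) hFd a b c).deriv]; rfl
  have hAY : ∀ a b c : ℝ, AopY By u a b c
      = (Real.exp (-c) : ℂ) * (-Complex.I * dd (unc u) ee2 (a, b, c))
        + 2 * Complex.I * (By : ℂ) * (-Complex.I * dd (unc u) ee3 (a, b, c)) := by
    intro a b c
    show (Real.exp (-c) : ℂ) * (-Complex.I * deriv (fun t => unc u (a, t, c)) b)
        + 2 * Complex.I * (By : ℂ) * (-Complex.I * deriv (fun t => unc u (a, b, t)) c) = _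
    rw [(sliceY (unc u) hFd a b c).deriv, (sliceZ (unc u) hFd a b c).deriv]; rfl
  have hP : ∀ a b c : ℝ, PX Bx u a b c
      = (Real.exp c : ℂ) * (-Complex.I * dd (unc u) ee1 (a, b, c)) + (Bx : ℂ) * u a b c := by
    intro a b c
    show (Real.exp c : ℂ) * (-Complex.I * deriv (fun t => unc u (t, b, c)) a)
        + (Bx : ℂ) * u a b c = _
    rw [(sliceX (unc u) hFd a b c).deriv]; rfl
  have hPY : ∀ a b c : ℝ, PY By u a b c
      = (Real.exp (-c) : ℂ) * (-Complex.I * dd (unc u) ee2 (a, b, c)) + (By : ℂ) * u a b c := by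
    intro a b c
    show (Real.exp (-c) : ℂ) * (-Complex.I * deriv (fun t => unc u (a, t, c)) b)
        + (By : ℂ) * u a b c = _
    rw [(sliceY (unc u) hFd a b c).deriv]; rfl
  constructor
  · intro x y z
    have hexp : HasDerivAt (fun t : ℝ => (Real.exp t : ℂ)) (Real.exp z : ℂ) z :=
      (Real.hasDerivAt_exp z).ofReal_comp

    have hdA1 : deriv (fun t => (Real.exp z : ℂ) * (-Complex.I * dd (unc u) ee1 (t, y, z))
          - 2 * Complex.I * (Bx : ℂ) * (-Complex.I * dd (unc u) ee3 (t, y, z))) x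
        = (Real.exp z : ℂ) * (-Complex.I * fderiv ℝ (dd (unc u) ee1) (x, y, z) ee1)
          - 2 * Complex.I * (Bx : ℂ) * (-Complex.I * fderiv ℝ (dd (unc u) ee3) (x, y, z) ee1) :=
      ((((sliceX _ hG1d x y z).const_mul (-Complex.I)).const_mul _).sub
        (((sliceX _ hG3d x y z).const_mul (-Complex.I)).const_mul _)).deriv
    have hdA3 : deriv (fun t => (Real.exp t : ℂ) * (-Complex.I * dd (unc u) ee1 (x, y, t))
          - 2 * Complex.I * (Bx : ℂ) * (-Complex.I * dd (unc u) ee3 (x, y, t))) z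
        = ((Real.exp z : ℂ) * (-Complex.I * dd (unc u) ee1 (x, y, z))
            + (Real.exp z : ℂ) * (-Complex.I * fderiv ℝ (dd (unc u) ee1) (x, y, z) ee3))
          - 2 * Complex.I * (Bx : ℂ) * (-Complex.I * fderiv ℝ (dd (unc u) ee3) (x, y, z) ee3) :=
      ((hexp.mul ((sliceZ _ hG1d x y z).const_mul (-Complex.I))).sub
        (((sliceZ _ hG3d x y z).const_mul (-Complex.I)).const_mul _)).deriv
    have hAA : Adag Bx (Aop Bx u) x y z
        = (Real.exp z : ℂ) * (-Complex.I *
            ((Real.exp z : ℂ) * (-Complex.I * fderiv ℝ (dd (unc u) ee1) (x, y, z) ee1)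
            - 2 * Complex.I * (Bx : ℂ) * (-Complex.I * fderiv ℝ (dd (unc u) ee3) (x, y, z) ee1)))
          + 2 * Complex.I * (Bx : ℂ) * (-Complex.I *
            (((Real.exp z : ℂ) * (-Complex.I * dd (unc u) ee1 (x, y, z))
              + (Real.exp z : ℂ) * (-Complex.I * fderiv ℝ (dd (unc u) ee1) (x, y, z) ee3))
            - 2 * Complex.I * (Bx : ℂ) * (-Complex.I * fderiv ℝ (dd (unc u) ee3) (x, y, z) ee3))) := by
      simp only [Adag, DX, DZ]
      rw [show (fun t => Aop Bx u t y z)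
            = (fun t => (Real.exp z : ℂ) * (-Complex.I * dd (unc u) ee1 (t, y, z))
              - 2 * Complex.I * (Bx : ℂ) * (-Complex.I * dd (unc u) ee3 (t, y, z)))
          from funext fun t => hA t y z,
        show (fun t => Aop Bx u x y t)
            = (fun t => (Real.exp t : ℂ) * (-Complex.I * dd (unc u) ee1 (x, y, t))
              - 2 * Complex.I * (Bx : ℂ) * (-Complex.I * dd (unc u) ee3 (x, y, t)))
          from funext fun t => hA x y t,
        hdA1, hdA3]
    have hDZZ : DZ (DZ u) x y z
        = -Complex.I * (-Complex.I * fderiv ℝ (dd (unc u) ee3) (x, y, z) ee3) := by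
      show -Complex.I * deriv (fun t => DZ u x y t) z = _
      rw [show (fun t => DZ u x y t)
            = (fun t => -Complex.I * dd (unc u) ee3 (x, y, t)) from funext fun t => by
          show -Complex.I * deriv (fun s => unc u (x, y, s)) t = _
          rw [(sliceZ (unc u) hFd x y t).deriv]; rfl,
        ((sliceZ _ hG3d x y z).const_mul (-Complex.I)).deriv]

    have hDXX : DX (DX u) x y z
        = -Complex.I * (-Complex.I * fderiv ℝ (dd (unc u) ee1) (x, y, z) ee1) := by
      show -Complex.I * deriv (fun t => DX u t y z) x = _
      rw [show (fun t => DX u t y z)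
            = (fun t => -Complex.I * dd (unc u) ee1 (t, y, z)) from funext fun t => hDXp t y z,
        ((sliceX _ hG1d x y z).const_mul (-Complex.I)).deriv]
    have hexp2 : (Real.exp (2*z) : ℂ) = (Real.exp z : ℂ) * (Real.exp z : ℂ) := by
      rw [← Complex.ofReal_mul, ← Real.exp_add]; norm_num [two_mul]
    rw [hAA, hDXX, hDZZ, hDXp x y z, hexp2, symm_dd (unc u) hu' (x, y, z) ee3 ee1]
    ring_nf
    simp only [hI2, hI3, hI4]
    ring
  · intro x y z
    have hexp : HasDerivAt (fun t : ℝ => (Real.exp t : ℂ)) (Real.exp z : ℂ) z :=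
      (Real.hasDerivAt_exp z).ofReal_comp
    have hexpneg : HasDerivAt (fun t : ℝ => (Real.exp (-t) : ℂ)) (-(Real.exp (-z) : ℂ)) z := by
      have h1 : HasDerivAt (fun t : ℝ => Real.exp (-t)) (-Real.exp (-z)) z := by
        simpa using ((hasDerivAt_id z).neg).exp
      simpa using h1.ofReal_comp

    have hdA1 : deriv (fun t => (Real.exp z : ℂ) * (-Complex.I * dd (unc u) ee1 (t, y, z))
          - 2 * Complex.I * (Bx : ℂ) * (-Complex.I * dd (unc u) ee3 (t, y, z))) x
        = (Real.exp z : ℂ) * (-Complex.I * fderiv ℝ (dd (unc u) ee1) (x, y, z) ee1)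
          - 2 * Complex.I * (Bx : ℂ) * (-Complex.I * fderiv ℝ (dd (unc u) ee3) (x, y, z) ee1) :=
      ((((sliceX _ hG1d x y z).const_mul (-Complex.I)).const_mul _).sub
        (((sliceX _ hG3d x y z).const_mul (-Complex.I)).const_mul _)).deriv
    have hdA3 : deriv (fun t => (Real.exp t : ℂ) * (-Complex.I * dd (unc u) ee1 (x, y, t))
          - 2 * Complex.I * (Bx : ℂ) * (-Complex.I * dd (unc u) ee3 (x, y, t))) z
        = ((Real.exp z : ℂ) * (-Complex.I * dd (unc u) ee1 (x, y, z))
            + (Real.exp z : ℂ) * (-Complex.I * fderiv ℝ (dd (unc u) ee1) (x, y, z) ee3))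
          - 2 * Complex.I * (Bx : ℂ) * (-Complex.I * fderiv ℝ (dd (unc u) ee3) (x, y, z) ee3) :=
      ((hexp.mul ((sliceZ _ hG1d x y z).const_mul (-Complex.I))).sub
        (((sliceZ _ hG3d x y z).const_mul (-Complex.I)).const_mul _)).deriv
    have hAA : Adag Bx (Aop Bx u) x y z
        = (Real.exp z : ℂ) * (-Complex.I *
            ((Real.exp z : ℂ) * (-Complex.I * fderiv ℝ (dd (unc u) ee1) (x, y, z) ee1)
            - 2 * Complex.I * (Bx : ℂ) * (-Complex.I * fderiv ℝ (dd (unc u) ee3) (x, y, z) ee1)))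
          + 2 * Complex.I * (Bx : ℂ) * (-Complex.I *
            (((Real.exp z : ℂ) * (-Complex.I * dd (unc u) ee1 (x, y, z))
              + (Real.exp z : ℂ) * (-Complex.I * fderiv ℝ (dd (unc u) ee1) (x, y, z) ee3))
            - 2 * Complex.I * (Bx : ℂ) * (-Complex.I * fderiv ℝ (dd (unc u) ee3) (x, y, z) ee3))) := by
      simp only [Adag, DX, DZ]
      rw [show (fun t => Aop Bx u t y z)
            = (fun t => (Real.exp z : ℂ) * (-Complex.I * dd (unc u) ee1 (t, y, z))
              - 2 * Complex.I * (Bx : ℂ) * (-Complex.I * dd (unc u) ee3 (t, y, z)))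
          from funext fun t => hA t y z,
        show (fun t => Aop Bx u x y t)
            = (fun t => (Real.exp t : ℂ) * (-Complex.I * dd (unc u) ee1 (x, y, t))
              - 2 * Complex.I * (Bx : ℂ) * (-Complex.I * dd (unc u) ee3 (x, y, t)))
          from funext fun t => hA x y t,
        hdA1, hdA3]
    have hDZZ : DZ (DZ u) x y z
        = -Complex.I * (-Complex.I * fderiv ℝ (dd (unc u) ee3) (x, y, z) ee3) := by
      show -Complex.I * deriv (fun t => DZ u x y t) z = _
      rw [show (fun t => DZ u x y t)
            = (fun t => -Complex.I * dd (unc u) ee3 (x, y, t)) from funext fun t => by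
          show -Complex.I * deriv (fun s => unc u (x, y, s)) t = _
          rw [(sliceZ (unc u) hFd x y t).deriv]; rfl,
        ((sliceZ _ hG3d x y z).const_mul (-Complex.I)).deriv]

    have hdY2 : deriv (fun t => (Real.exp (-z) : ℂ) * (-Complex.I * dd (unc u) ee2 (x, t, z))
          + 2 * Complex.I * (By : ℂ) * (-Complex.I * dd (unc u) ee3 (x, t, z))) y
        = (Real.exp (-z) : ℂ) * (-Complex.I * fderiv ℝ (dd (unc u) ee2) (x, y, z) ee2)
          + 2 * Complex.I * (By : ℂ) * (-Complex.I * fderiv ℝ (dd (unc u) ee3) (x, y, z) ee2) :=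
      ((((sliceY _ hG2d x y z).const_mul (-Complex.I)).const_mul _).add
        (((sliceY _ hG3d x y z).const_mul (-Complex.I)).const_mul _)).deriv
    have hdY3 : deriv (fun t => (Real.exp (-t) : ℂ) * (-Complex.I * dd (unc u) ee2 (x, y, t))
          + 2 * Complex.I * (By : ℂ) * (-Complex.I * dd (unc u) ee3 (x, y, t))) z
        = (-(Real.exp (-z) : ℂ) * (-Complex.I * dd (unc u) ee2 (x, y, z))
            + (Real.exp (-z) : ℂ) * (-Complex.I * fderiv ℝ (dd (unc u) ee2) (x, y, z) ee3))
          + 2 * Complex.I * (By : ℂ) * (-Complex.I * fderiv ℝ (dd (unc u) ee3) (x, y, z) ee3) :=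
      ((hexpneg.mul ((sliceZ _ hG2d x y z).const_mul (-Complex.I))).add
        (((sliceZ _ hG3d x y z).const_mul (-Complex.I)).const_mul _)).deriv
    have hYY : AdagY By (AopY By u) x y z
        = (Real.exp (-z) : ℂ) * (-Complex.I *
            ((Real.exp (-z) : ℂ) * (-Complex.I * fderiv ℝ (dd (unc u) ee2) (x, y, z) ee2)
            + 2 * Complex.I * (By : ℂ) * (-Complex.I * fderiv ℝ (dd (unc u) ee3) (x, y, z) ee2)))
          - 2 * Complex.I * (By : ℂ) * (-Complex.I *
            ((-(Real.exp (-z) : ℂ) * (-Complex.I * dd (unc u) ee2 (x, y, z))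
              + (Real.exp (-z) : ℂ) * (-Complex.I * fderiv ℝ (dd (unc u) ee2) (x, y, z) ee3))
            + 2 * Complex.I * (By : ℂ) * (-Complex.I * fderiv ℝ (dd (unc u) ee3) (x, y, z) ee3))) := by
      simp only [AdagY, DY, DZ]
      rw [show (fun t => AopY By u x t z)
            = (fun t => (Real.exp (-z) : ℂ) * (-Complex.I * dd (unc u) ee2 (x, t, z))
              + 2 * Complex.I * (By : ℂ) * (-Complex.I * dd (unc u) ee3 (x, t, z)))
          from funext fun t => hAY x t z,
        show (fun t => AopY By u x y t)
            = (fun t => (Real.exp (-t) : ℂ) * (-Complex.I * dd (unc u) ee2 (x, y, t))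
              + 2 * Complex.I * (By : ℂ) * (-Complex.I * dd (unc u) ee3 (x, y, t)))
          from funext fun t => hAY x y t,
        hdY2, hdY3]
    have hdPX : deriv (fun t => (Real.exp z : ℂ) * (-Complex.I * dd (unc u) ee1 (t, y, z))
          + (Bx : ℂ) * u t y z) x
        = (Real.exp z : ℂ) * (-Complex.I * fderiv ℝ (dd (unc u) ee1) (x, y, z) ee1)
          + (Bx : ℂ) * dd (unc u) ee1 (x, y, z) :=
      ((((sliceX _ hG1d x y z).const_mul (-Complex.I)).const_mul _).add
        ((sliceX (unc u) hFd x y z).const_mul _)).deriv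
    have hPXX : PX Bx (PX Bx u) x y z
        = (Real.exp z : ℂ) * (-Complex.I *
            ((Real.exp z : ℂ) * (-Complex.I * fderiv ℝ (dd (unc u) ee1) (x, y, z) ee1)
            + (Bx : ℂ) * dd (unc u) ee1 (x, y, z)))
          + (Bx : ℂ) * ((Real.exp z : ℂ) * (-Complex.I * dd (unc u) ee1 (x, y, z))
            + (Bx : ℂ) * u x y z) := by
      show (Real.exp z : ℂ) * (-Complex.I * deriv (fun t => PX Bx u t y z) x)
          + (Bx : ℂ) * PX Bx u x y z = _
      rw [show (fun t => PX Bx u t y z)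
            = (fun t => (Real.exp z : ℂ) * (-Complex.I * dd (unc u) ee1 (t, y, z))
              + (Bx : ℂ) * u t y z) from funext fun t => hP t y z,
        hdPX, hP x y z]
    have hdPY : deriv (fun t => (Real.exp (-z) : ℂ) * (-Complex.I * dd (unc u) ee2 (x, t, z))
          + (By : ℂ) * u x t z) y
        = (Real.exp (-z) : ℂ) * (-Complex.I * fderiv ℝ (dd (unc u) ee2) (x, y, z) ee2)
          + (By : ℂ) * dd (unc u) ee2 (x, y, z) :=
      ((((sliceY _ hG2d x y z).const_mul (-Complex.I)).const_mul _).add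
        ((sliceY (unc u) hFd x y z).const_mul _)).deriv
    have hPYY : PY By (PY By u) x y z
        = (Real.exp (-z) : ℂ) * (-Complex.I *
            ((Real.exp (-z) : ℂ) * (-Complex.I * fderiv ℝ (dd (unc u) ee2) (x, y, z) ee2)
            + (By : ℂ) * dd (unc u) ee2 (x, y, z)))
          + (By : ℂ) * ((Real.exp (-z) : ℂ) * (-Complex.I * dd (unc u) ee2 (x, y, z))
            + (By : ℂ) * u x y z) := by
      show (Real.exp (-z) : ℂ) * (-Complex.I * deriv (fun t => PY By u x t z) y)
          + (By : ℂ) * PY By u x y z = _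
      rw [show (fun t => PY By u x t z)
            = (fun t => (Real.exp (-z) : ℂ) * (-Complex.I * dd (unc u) ee2 (x, t, z))
              + (By : ℂ) * u x t z) from funext fun t => hPY x t z,
        hdPY, hPY x y z]
    rw [hPXX, hPYY, hDZZ, hAA, hYY, symm_dd (unc u) hu' (x, y, z) ee3 ee1,
      symm_dd (unc u) hu' (x, y, z) ee3 ee2]
    ring_nf
    simp only [hI2, hI3, hI4]
    ring
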